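/- arXiv:2211.00532 — 2 statements merged into one kernel-verified Lean document; each statement's English description precedes it below -/
import Mathlib

section
/- Let (Hₙ)ₙ be non-decreasing functions Hₙ : [0,T] → ℝ≥0 converging pointwise on [0,T] to a non-decreasing function H, and let S : [0,T] → ℝ be a bounded càdlàg function. Suppose additionally that the integrals are defined so that jumps of the integrator at a time u are paid at the left limit S(u−). Then ∫₀ᵗ S dHₙ → ∫₀ᵗ S dH for every t ∈ [0,T], where ∫₀ᵗ S dK := ∫₀ᵗ S dK^c + Σ_{0<u≤t} S(u−) ΔK(u) + Σ_{0≤u<t} S(u) Δ₊K(u) for a non-decreasing K with continuous part K^c, left jumps ΔK(u) = K(u) − K(u−) and right jumps Δ₊K(u) = K(u+) − K(u). -/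
open Set Filter Topology MeasureTheory Function

/-!
On a step `[x, y)` on which `S` stays `ε`-close to `c`, the modified integral against any
non-decreasing `K` grows by `c (K y - K x)` up to `3 ε (K y - K x)`: on `(x, y)` it is the
Lebesgue–Stieltjes integral minus the left jumps weighted by `S - S(-)`, a weight at most `2 ε`, and
the remaining endpoint jumps are charged at `S(y-)` and `S x`. A càdlàg function is traversed from
`0` to `t` by finitely many such steps with `c = S x`, and on each step the increments of `Hn`
converge to those of `H`; so eventually the two integrals differ by at most `6 ε (H t - H 0)` plus
an arbitrarily small amount.
-/

/-- The modified Stieltjes integral `∫₀ᵗ S dK` of `S` against a non-decreasing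
integrator `K`, in the convention where left jumps `ΔK(u) = K u - K(u-)` of the
integrator are charged at the left limit `S(u-)` and right jumps
`Δ₊K(u) = K(u+) - K u` are charged at `S u` for `0 ≤ u < t`.  It is realised as the
Lebesgue–Stieltjes integral against the right-continuous regularisation of `K`,
corrected at the left jumps (re-charged at `S(u-)`), with the right jump at `t`
removed and the right jump at `0` added. -/
noncomputable def modInt (S K : ℝ → ℝ) (hK : Monotone K) (t : ℝ) : ℝ :=
  (∫ u in Set.Ioc (0 : ℝ) t, S u ∂hK.stieltjesFunction.measure)
    - (∑' u : ℝ, Set.indicator (Set.Ioc (0 : ℝ) t)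
        (fun u => (S u - Function.leftLim S u) * (K u - Function.leftLim K u)) u)
    - S t * (Function.rightLim K t - K t)
    + S 0 * (Function.rightLim K 0 - K 0)

namespace Monotone

variable {K : ℝ → ℝ} (hK : Monotone K)
include hK

theorem leftLim_stieltjesFunction (b : ℝ) : leftLim hK.stieltjesFunction b = leftLim K b :=
  leftLim_rightLim (hK.tendsto_leftLim b)

theorem measureReal_stieltjesFunction_Ioo {a b : ℝ} (hab : a < b) :
    hK.stieltjesFunction.measure.real (Ioo a b) = leftLim K b - rightLim K a := by
  rw [measureReal_def, StieltjesFunction.measure_Ioo, hK.stieltjesFunction_eq,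
    hK.leftLim_stieltjesFunction]
  exact ENNReal.toReal_ofReal (sub_nonneg.2 (hK.rightLim_le_leftLim hab))

theorem measureReal_stieltjesFunction_singleton (b : ℝ) :
    hK.stieltjesFunction.measure.real {b} = rightLim K b - leftLim K b := by
  rw [measureReal_def, StieltjesFunction.measure_singleton, hK.stieltjesFunction_eq,
    hK.leftLim_stieltjesFunction]
  exact ENNReal.toReal_ofReal (sub_nonneg.2 (hK.leftLim_le_rightLim le_rfl))

theorem sub_leftLim_nonneg (u : ℝ) : 0 ≤ K u - leftLim K u :=
  sub_nonneg.2 (hK.leftLim_le le_rfl)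

theorem sub_leftLim_le_measureReal_singleton (u : ℝ) :
    K u - leftLim K u ≤ hK.stieltjesFunction.measure.real {u} := by
  rw [hK.measureReal_stieltjesFunction_singleton]
  linarith [hK.le_rightLim (le_refl u)]

theorem sum_indicator_sub_leftLim_le {s : Set ℝ} (hs : hK.stieltjesFunction.measure s ≠ ⊤)
    (F : Finset ℝ) :
    ∑ u ∈ F, s.indicator (fun u => K u - leftLim K u) u
      ≤ hK.stieltjesFunction.measure.real s := by
  classical
  calc ∑ u ∈ F, s.indicator (fun u => K u - leftLim K u) u
      = ∑ u ∈ F with u ∈ s, (K u - leftLim K u) := by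
        simp only [Finset.sum_filter, indicator_apply]
    _ ≤ ∑ u ∈ F with u ∈ s, hK.stieltjesFunction.measure.real {u} :=
        Finset.sum_le_sum fun u _ => hK.sub_leftLim_le_measureReal_singleton u
    _ = hK.stieltjesFunction.measure.real ↑(F.filter (· ∈ s)) := sum_measureReal_singleton _
    _ ≤ hK.stieltjesFunction.measure.real s :=
        measureReal_mono (fun u hu => (Finset.mem_filter.1 hu).2) hs

theorem summable_indicator_sub_leftLim {s : Set ℝ} (hs : hK.stieltjesFunction.measure s ≠ ⊤) :
    Summable (s.indicator fun u => K u - leftLim K u) :=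
  summable_of_sum_le (fun u => indicator_nonneg (fun u _ => hK.sub_leftLim_nonneg u) u)
    (hK.sum_indicator_sub_leftLim_le hs)

theorem norm_indicator_mul_sub_leftLim_le {s : Set ℝ} {g : ℝ → ℝ} {C : ℝ}
    (hg : ∀ u ∈ s, |g u| ≤ C) (u : ℝ) :
    ‖s.indicator (fun u => g u * (K u - leftLim K u)) u‖
      ≤ C * s.indicator (fun u => K u - leftLim K u) u := by
  by_cases hu : u ∈ s
  · simp only [indicator_of_mem hu, Real.norm_eq_abs, abs_mul,
      abs_of_nonneg (hK.sub_leftLim_nonneg u)]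
    exact mul_le_mul_of_nonneg_right (hg u hu) (hK.sub_leftLim_nonneg u)
  · simp [indicator_of_notMem hu]

theorem summable_indicator_mul_sub_leftLim {s : Set ℝ}
    (hs : hK.stieltjesFunction.measure s ≠ ⊤) {g : ℝ → ℝ} {C : ℝ} (hg : ∀ u ∈ s, |g u| ≤ C) :
    Summable (s.indicator fun u => g u * (K u - leftLim K u)) :=
  .of_norm_bounded ((hK.summable_indicator_sub_leftLim hs).mul_left C)
    (hK.norm_indicator_mul_sub_leftLim_le hg)

theorem abs_tsum_indicator_mul_sub_leftLim_le {s : Set ℝ}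
    (hs : hK.stieltjesFunction.measure s ≠ ⊤) {g : ℝ → ℝ} {C : ℝ} (hg : ∀ u ∈ s, |g u| ≤ C)
    (hC : 0 ≤ C) :
    |∑' u, s.indicator (fun u => g u * (K u - leftLim K u)) u|
      ≤ C * hK.stieltjesFunction.measure.real s :=
  calc |∑' u, s.indicator (fun u => g u * (K u - leftLim K u)) u|
      ≤ C * ∑' u, s.indicator (fun u => K u - leftLim K u) u :=
        tsum_of_norm_bounded ((hK.summable_indicator_sub_leftLim hs).hasSum.mul_left C)
          (hK.norm_indicator_mul_sub_leftLim_le hg)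
    _ ≤ C * hK.stieltjesFunction.measure.real s :=
        mul_le_mul_of_nonneg_left (Real.tsum_le_of_sum_le
          (fun u => indicator_nonneg (fun u _ => hK.sub_leftLim_nonneg u) u)
          (hK.sum_indicator_sub_leftLim_le hs)) hC

end Monotone

theorem abs_leftLim_sub_le {S : ℝ → ℝ} {x c ε : ℝ} (hl : ∃ l, Tendsto S (𝓝[<] x) (𝓝 l))
    (h : ∀ᶠ u in 𝓝[<] x, |S u - c| ≤ ε) : |leftLim S x - c| ≤ ε := by
  obtain ⟨l, hl⟩ := hl
  rw [leftLim_eq_of_tendsto hl]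
  exact le_of_tendsto (hl.sub_const c).abs h

theorem modInt_zero (S K : ℝ → ℝ) (hK : Monotone K) : modInt S K hK 0 = 0 := by
  simp [modInt]

theorem modInt_sub_modInt {S : ℝ → ℝ} {M : ℝ} {K : ℝ → ℝ} (hK : Monotone K)
    (hbdd : ∀ u, |S u| ≤ M) (hSmeas : Measurable S)
    (hSll : ∀ x, ∃ l, Tendsto S (𝓝[<] x) (𝓝 l)) {a b : ℝ} (ha : 0 ≤ a) (hab : a < b) :
    modInt S K hK b - modInt S K hK a
      = (∫ u in Ioo a b, S u ∂hK.stieltjesFunction.measure)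
        - ∑' u, (Ioo a b).indicator
            (fun u => (S u - leftLim S u) * (K u - leftLim K u)) u
        + leftLim S b * (K b - leftLim K b) + S a * (rightLim K a - K a) := by
  set μ := hK.stieltjesFunction.measure
  set f := fun u => (S u - leftLim S u) * (K u - leftLim K u)
  have hfin : ∀ s ⊆ Ioc 0 b, μ s ≠ ⊤ := fun s hs =>
    ne_top_of_le_ne_top measure_Ioc_lt_top.ne (measure_mono hs)
  have hint : ∀ s ⊆ Ioc 0 b, IntegrableOn S s μ := fun s hs =>
    Measure.integrableOn_of_bounded (hfin s hs) hSmeas.aestronglyMeasurable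
      (Eventually.of_forall fun u => hbdd u)
  have hleft : ∀ u, |leftLim S u| ≤ M := fun u => by
    simpa using abs_leftLim_sub_le (c := 0) (hSll u) (.of_forall fun v => by simpa using hbdd v)
  have hsum : ∀ s ⊆ Ioc 0 b, Summable (s.indicator f) := fun s hs =>
    hK.summable_indicator_mul_sub_leftLim (hfin s hs) (C := 2 * M)
      fun u _ => (abs_sub _ _).trans (by linarith [hbdd u, hleft u])
  have hIoc : Ioc 0 b = Ioc 0 a ∪ (Ioo a b ∪ {b}) := by
    rw [Ioo_union_right hab, Ioc_union_Ioc_eq_Ioc ha hab.le]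
  have hdisj₁ : Disjoint (Ioc 0 a) (Ioo a b ∪ {b}) := by
    rw [Ioo_union_right hab]; exact Ioc_disjoint_Ioc_of_le le_rfl
  have hdisj₂ : Disjoint (Ioo a b) {b} := disjoint_singleton_right.2 fun h => h.2.false
  have hsub₁ : Ioc 0 a ⊆ Ioc 0 b := Ioc_subset_Ioc_right hab.le
  have hsub₂ : Ioo a b ∪ {b} ⊆ Ioc 0 b := by
    rw [Ioo_union_right hab]; exact Ioc_subset_Ioc_left ha
  have hsub₃ : Ioo a b ⊆ Ioc 0 b := subset_union_left.trans hsub₂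
  have hsub₄ : {b} ⊆ Ioc 0 b := subset_union_right.trans hsub₂
  have hintegral : ∫ u in Ioc 0 b, S u ∂μ
      = (∫ u in Ioc 0 a, S u ∂μ) + (∫ u in Ioo a b, S u ∂μ) + S b * μ.real {b} := by
    rw [hIoc, setIntegral_union hdisj₁ (measurableSet_Ioo.union (measurableSet_singleton b))
      (hint _ hsub₁) (hint _ hsub₂), setIntegral_union hdisj₂ (measurableSet_singleton b)
      (hint _ hsub₃) (hint _ hsub₄), integral_singleton, smul_eq_mul]
    ring
  have htsum : ∑' u, (Ioc 0 b).indicator f u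
      = (∑' u, (Ioc 0 a).indicator f u) + (∑' u, (Ioo a b).indicator f u) + f b := by
    rw [hIoc, indicator_union_of_disjoint hdisj₁, (hsum _ hsub₁).tsum_add (hsum _ hsub₂),
      indicator_union_of_disjoint hdisj₂, (hsum _ hsub₃).tsum_add (hsum _ hsub₄),
      tsum_eq_single b fun u hu => indicator_of_notMem (mem_singleton_iff.not.2 hu) f,
      indicator_of_mem (mem_singleton b)]
    ring
  simp only [modInt]
  rw [hintegral, htsum, hK.measureReal_stieltjesFunction_singleton]
  ring

theorem abs_modInt_sub_modInt_sub_le {S : ℝ → ℝ} {M : ℝ} {K : ℝ → ℝ} (hK : Monotone K)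
    (hbdd : ∀ u, |S u| ≤ M) (hSmeas : Measurable S)
    (hSll : ∀ x, ∃ l, Tendsto S (𝓝[<] x) (𝓝 l)) {a b c ε : ℝ} (ha : 0 ≤ a) (hab : a < b)
    (hclose : ∀ u ∈ Ico a b, |S u - c| ≤ ε) :
    |modInt S K hK b - modInt S K hK a - c * (K b - K a)| ≤ 3 * ε * (K b - K a) := by
  set μ := hK.stieltjesFunction.measure
  have hε : 0 ≤ ε := (abs_nonneg _).trans (hclose a ⟨le_rfl, hab⟩)
  have hleft : ∀ x ∈ Ioc a b, |leftLim S x - c| ≤ ε := fun x hx =>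
    abs_leftLim_sub_le (hSll x) (mem_of_superset (Ioo_mem_nhdsLT hx.1)
      fun u hu => hclose u ⟨hu.1.le, hu.2.trans_le hx.2⟩)
  have hintegral : |(∫ u in Ioo a b, S u ∂μ) - c * μ.real (Ioo a b)| ≤ ε * μ.real (Ioo a b) := by
    have hint : IntegrableOn S (Ioo a b) μ := Measure.integrableOn_of_bounded
      measure_Ioo_lt_top.ne hSmeas.aestronglyMeasurable (.of_forall fun u => hbdd u)
    rw [mul_comm c, ← smul_eq_mul, ← setIntegral_const,
      ← integral_sub hint (integrableOn_const measure_Ioo_lt_top.ne)]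
    exact norm_setIntegral_le_of_norm_le_const (f := fun u => S u - c) measure_Ioo_lt_top
      fun u hu => hclose u ⟨hu.1.le, hu.2⟩
  have hjumps : |∑' u, (Ioo a b).indicator
      (fun u => (S u - leftLim S u) * (K u - leftLim K u)) u| ≤ 2 * ε * μ.real (Ioo a b) :=
    hK.abs_tsum_indicator_mul_sub_leftLim_le measure_Ioo_lt_top.ne
      (fun u hu => (abs_sub_le (S u) c (leftLim S u)).trans (by
        rw [abs_sub_comm c]
        linarith [hclose u ⟨hu.1.le, hu.2⟩, hleft u ⟨hu.1, hu.2.le⟩]))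
      (by positivity)
  have hjump_b : |(leftLim S b - c) * (K b - leftLim K b)| ≤ ε * (K b - leftLim K b) := by
    rw [abs_mul, abs_of_nonneg (hK.sub_leftLim_nonneg b)]
    exact mul_le_mul_of_nonneg_right (hleft b ⟨hab, le_rfl⟩) (hK.sub_leftLim_nonneg b)
  have hjump_a : |(S a - c) * (rightLim K a - K a)| ≤ ε * (rightLim K a - K a) := by
    rw [abs_mul, abs_of_nonneg (sub_nonneg.2 (hK.le_rightLim le_rfl))]
    exact mul_le_mul_of_nonneg_right (hclose a ⟨le_rfl, hab⟩)
      (sub_nonneg.2 (hK.le_rightLim le_rfl))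
  have hμ := hK.measureReal_stieltjesFunction_Ioo hab
  have hpos_b := mul_nonneg hε (hK.sub_leftLim_nonneg b)
  have hpos_a := mul_nonneg hε (sub_nonneg.2 (hK.le_rightLim (le_refl a)))
  rw [modInt_sub_modInt hK hbdd hSmeas hSll ha hab]
  rw [abs_le] at hintegral hjumps hjump_b hjump_a ⊢
  rw [hμ] at hintegral hjumps
  constructor <;> linarith

theorem exists_Ico_abs_sub_le {S : ℝ → ℝ} {x ε : ℝ} (hx : Tendsto S (𝓝[>] x) (𝓝 (S x)))
    (hε : 0 < ε) : ∃ y > x, ∀ u ∈ Ico x y, |S u - S x| ≤ ε := by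
  have h := (continuousWithinAt_Ioi_iff_Ici.1 hx).eventually (Metric.closedBall_mem_nhds _ hε)
  obtain ⟨y, hxy, hsub⟩ := mem_nhdsGE_iff_exists_Ico_subset.1 h
  exact ⟨y, hxy, fun u hu => hsub hu⟩

theorem exists_Ioo_abs_sub_le {S : ℝ → ℝ} {x l ε : ℝ} (hl : Tendsto S (𝓝[<] x) (𝓝 l))
    (hε : 0 < ε) : ∃ a < x, ∀ u ∈ Ioo a x, ∀ v ∈ Ioo a x, |S u - S v| ≤ ε := by
  have h := hl.eventually (Metric.closedBall_mem_nhds l (half_pos hε))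
  obtain ⟨a, hax, hsub⟩ := mem_nhdsLT_iff_exists_Ioo_subset.1 h
  refine ⟨a, hax, fun u hu v hv => ?_⟩
  have hu' : dist (S u) l ≤ ε / 2 := hsub hu
  have hv' : dist (S v) l ≤ ε / 2 := hsub hv
  rw [← Real.dist_eq]
  linarith [dist_triangle_right (S u) (S v) l]

theorem cadlag_induction {S : ℝ → ℝ} (hSrc : ∀ x, Tendsto S (𝓝[>] x) (𝓝 (S x)))
    (hSll : ∀ x, ∃ l, Tendsto S (𝓝[<] x) (𝓝 l)) {ε : ℝ} (hε : 0 < ε) {P : ℝ → Prop} {a t : ℝ}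
    (ha : P a) (hstep : ∀ x y, a ≤ x → x < y → P x → (∀ u ∈ Ico x y, |S u - S x| ≤ ε) → P y)
    (hat : a ≤ t) : P t := by
  set A := {x ∈ Icc a t | P x}
  have haA : a ∈ A := ⟨⟨le_rfl, hat⟩, ha⟩
  have hA : BddAbove A := ⟨t, fun x hx => hx.1.2⟩
  have has : a ≤ sSup A := le_csSup hA haA
  have hst : sSup A ≤ t := csSup_le ⟨a, haA⟩ fun x hx => hx.1.2
  have hPs : P (sSup A) := by
    rcases has.eq_or_lt with h | h
    · exact h ▸ ha
    obtain ⟨l, hl⟩ := hSll (sSup A)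
    obtain ⟨a', ha', hosc⟩ := exists_Ioo_abs_sub_le hl hε
    obtain ⟨x, hxA, hx⟩ := exists_lt_of_lt_csSup ⟨a, haA⟩ (max_lt ha' h)
    rcases (le_csSup hA hxA).eq_or_lt with hxs | hxs
    · exact hxs ▸ hxA.2
    have hxI : x ∈ Ioo a' (sSup A) := ⟨(le_max_left _ _).trans_lt hx, hxs⟩
    exact hstep x _ hxA.1.1 hxs hxA.2 fun u hu =>
      hosc u ⟨hxI.1.trans_le hu.1, hu.2⟩ x hxI
  rcases hst.eq_or_lt with hst | hst
  · exact hst ▸ hPs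
  obtain ⟨y, hsy, hosc⟩ := exists_Ico_abs_sub_le (hSrc (sSup A)) hε
  have hy : sSup A < min y t := lt_min hsy hst
  have hyA : min y t ∈ A := ⟨⟨has.trans hy.le, min_le_right _ _⟩,
    hstep _ _ has hy hPs fun u hu => hosc u ⟨hu.1, hu.2.trans_le (min_le_left _ _)⟩⟩
  exact absurd (le_csSup hA hyA) hy.not_ge

theorem eventually_abs_modInt_sub_le_of_step {Hn : ℕ → ℝ → ℝ} {H : ℝ → ℝ}
    (hHn : ∀ n, Monotone (Hn n)) (hH : Monotone H) {S : ℝ → ℝ} {M : ℝ}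
    (hconv : ∀ t, Tendsto (fun n => Hn n t) atTop (𝓝 (H t)))
    (hbdd : ∀ u, |S u| ≤ M) (hSmeas : Measurable S) (hSll : ∀ x, ∃ l, Tendsto S (𝓝[<] x) (𝓝 l))
    {ε x y : ℝ} (hx : 0 ≤ x) (hxy : x < y) (hclose : ∀ u ∈ Ico x y, |S u - S x| ≤ ε)
    (hPx : ∀ δ > 0, ∀ᶠ n in atTop,
      |modInt S (Hn n) (hHn n) x - modInt S H hH x| ≤ 6 * ε * (H x - H 0) + δ) :
    ∀ δ > 0, ∀ᶠ n in atTop,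
      |modInt S (Hn n) (hHn n) y - modInt S H hH y| ≤ 6 * ε * (H y - H 0) + δ := by
  intro δ hδ
  have hε : 0 ≤ ε := (abs_nonneg _).trans (hclose x ⟨le_rfl, hxy⟩)
  set r : ℕ → ℝ := fun n => (Hn n y - Hn n x) - (H y - H x)
  have hr : Tendsto (fun n => (3 * ε + |S x|) * |r n|) atTop (𝓝 0) := by
    have : Tendsto r atTop (𝓝 0) := by
      simpa [r] using ((hconv y).sub (hconv x)).sub_const (H y - H x)
    simpa using this.abs.const_mul (3 * ε + |S x|)
  filter_upwards [hPx (δ / 2) (half_pos hδ), hr.eventually_le_const (half_pos hδ)]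
    with n hn hrn
  have hHn_step := abs_modInt_sub_modInt_sub_le (hHn n) hbdd hSmeas hSll hx hxy hclose
  have hH_step := abs_modInt_sub_modInt_sub_le hH hbdd hSmeas hSll hx hxy hclose
  have hcr : |S x * r n| ≤ |S x| * |r n| := (abs_mul _ _).le
  have hεr : 3 * ε * r n ≤ 3 * ε * |r n| :=
    mul_le_mul_of_nonneg_left (le_abs_self _) (by positivity)
  have hrn_def : r n = (Hn n y - Hn n x) - (H y - H x) := rfl
  rw [abs_le] at hn hHn_step hH_step hcr ⊢
  constructor <;> linarith

theorem stmt_5_general (T : ℝ)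
    (Hn : ℕ → ℝ → ℝ) (H : ℝ → ℝ)
    (hHn : ∀ n, Monotone (Hn n)) (hH : Monotone H)
    (hconv : ∀ t, Tendsto (fun n => Hn n t) atTop (nhds (H t)))
    (S : ℝ → ℝ) (M : ℝ) (hbdd : ∀ u, |S u| ≤ M)
    (hSmeas : Measurable S)
    (hSrc : ∀ t, Tendsto S (nhdsWithin t (Set.Ioi t)) (nhds (S t)))
    (hSll : ∀ t, ∃ l, Tendsto S (nhdsWithin t (Set.Iio t)) (nhds l)) :
    ∀ t ∈ Set.Icc (0 : ℝ) T,
      Tendsto (fun n => modInt S (Hn n) (hHn n) t) atTop (nhds (modInt S H hH t)) := by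
  intro t ht
  have hclose : ∀ ε > 0, ∀ δ > 0, ∀ᶠ n in atTop,
      |modInt S (Hn n) (hHn n) t - modInt S H hH t| ≤ 6 * ε * (H t - H 0) + δ :=
    fun ε hε => cadlag_induction hSrc hSll hε
      (fun δ hδ => .of_forall fun n => by simp [modInt_zero, hδ.le])
      (fun x y hx hxy hPx hosc => eventually_abs_modInt_sub_le_of_step hHn hH hconv hbdd hSmeas
        hSll hx hxy hosc hPx) ht.1
  refine Metric.tendsto_nhds.2 fun η hη => ?_
  obtain ⟨ε, hε, hεη⟩ := exists_pos_mul_lt (half_pos hη) (6 * (H t - H 0))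
  filter_upwards [hclose ε hε (η / 4) (by positivity)] with n hn
  rw [Real.dist_eq]
  linarith

/-- If non-decreasing nonnegative integrators `Hₙ` converge pointwise to the
non-decreasing `H`, and `S` is a bounded càdlàg integrand, then the modified
Stieltjes integrals `∫₀ᵗ S dHₙ` converge to `∫₀ᵗ S dH` for every `t ∈ [0,T]`. -/
theorem stmt_5 (T : ℝ) (hT : 0 < T)
    (Hn : ℕ → ℝ → ℝ) (H : ℝ → ℝ)
    (hHn : ∀ n, Monotone (Hn n)) (hH : Monotone H)
    (hHnpos : ∀ n t, 0 ≤ Hn n t) (hHpos : ∀ t, 0 ≤ H t)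
    (hconv : ∀ t, Tendsto (fun n => Hn n t) atTop (nhds (H t)))
    (S : ℝ → ℝ) (M : ℝ) (hbdd : ∀ u, |S u| ≤ M)
    (hSmeas : Measurable S)
    (hSrc : ∀ t, Tendsto S (nhdsWithin t (Set.Ioi t)) (nhds (S t)))
    (hSll : ∀ t, ∃ l, Tendsto S (nhdsWithin t (Set.Iio t)) (nhds l)) :
    ∀ t ∈ Set.Icc (0 : ℝ) T,
      Tendsto (fun n => modInt S (Hn n) (hHn n) t) atTop (nhds (modInt S H hH t)) :=
  stmt_5_general T Hn H hHn hH hconv S M hbdd hSmeas hSrc hSll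
end

section
/- Let (fₙ)ₙ be a sequence of ℝ≥0-valued random variables on a probability space (Ω, 𝓕, P) such that the set of all convex combinations conv(f₁, f₂, …) is bounded in L⁰ (bounded in probability). Then there exists a sequence gₙ ∈ conv(fₙ, f_{n+1}, …) of forward convex combinations converging P-almost surely to a random variable g that is finite almost surely. -/
open Set Filter Topology MeasureTheory Finset

/-! The utility `u x = 1 - exp (-x)` is bounded on `[0, ∞)` and uniformly strictly concave on
bounded intervals. Let `α n` be the supremum of `E[u h]` over `h ∈ conv(fₙ, fₙ₊₁, …)`; it decreases
in `n`, and we pick `gₙ ∈ conv(fₙ, fₙ₊₁, …)` with `E[u gₙ] > α n - 2⁻ⁿ`. For `p, q ≥ N` the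
midpoint of `g_p` and `g_q` lies in `conv(f_N, …)`, so the concavity gap
`E[u ((g_p + g_q) / 2)] - (E[u g_p] + E[u g_q]) / 2` is at most `α N - inf α + 2⁻ᴺ`, which tends
to `0`. Pointwise this gap is at least a constant `δ(M, ε) > 0` where `|g_p - g_q| ≥ ε` and both
are `≤ M`, and boundedness in `L⁰` makes `{g_p ≥ M}` uniformly small. Hence `(gₙ)` is Cauchy in
probability, a subsequence `g_{n_k}` converges almost surely (Borel–Cantelli), and
`g_{n_k} ∈ conv(f_k, f_{k+1}, …)` because `n_k ≥ k`. -/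

theorem exists_sum_range_eq_of_mem_convexHull_range {𝕜 E : Type*} [Field 𝕜] [LinearOrder 𝕜]
    [IsStrictOrderedRing 𝕜] [AddCommGroup E] [Module 𝕜 E] {v : ℕ → E} {x : E}
    (hx : x ∈ convexHull 𝕜 (Set.range v)) :
    ∃ (m : ℕ) (a : ℕ → 𝕜), (∀ j, 0 ≤ a j) ∧ ∑ j ∈ Finset.range (m + 1), a j = 1 ∧
      x = ∑ j ∈ Finset.range (m + 1), a j • v j := by
  classical
  rw [convexHull_range_eq_exists_affineCombination] at hx
  obtain ⟨s, w, hw₀, hw₁, rfl⟩ := hx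
  obtain ⟨m, hm⟩ := s.exists_nat_subset_range
  have hsub : s ⊆ Finset.range (m + 1) := hm.trans (Finset.range_subset_range.2 m.le_succ)
  refine ⟨m, fun j => if j ∈ s then w j else 0, fun j => ?_, ?_, ?_⟩
  · dsimp only
    split_ifs with hj
    exacts [hw₀ j hj, le_rfl]
  · rw [Finset.sum_ite_mem, Finset.inter_eq_right.2 hsub, hw₁]
  · simp only [ite_smul, zero_smul, Finset.sum_ite_mem, Finset.inter_eq_right.2 hsub,
      s.affineCombination_eq_linear_combination v w hw₁]

theorem measurable_and_nonneg_of_mem_convexHull {Ω : Type*} [MeasurableSpace Ω]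
    {s : Set (Ω → ℝ)} (hs : ∀ g ∈ s, Measurable g ∧ 0 ≤ g) {g : Ω → ℝ}
    (hg : g ∈ convexHull ℝ s) : Measurable g ∧ 0 ≤ g := by
  refine convexHull_min (t := {g | Measurable g ∧ 0 ≤ g}) hs ?_ hg
  rintro x ⟨hxm, hx0⟩ y ⟨hym, hy0⟩ a b ha hb -
  exact ⟨(hxm.const_smul a).add (hym.const_smul b),
    add_nonneg (smul_nonneg ha hx0) (smul_nonneg hb hy0)⟩

theorem exists_seq_midpoint_gap_lt {E : Type*} [AddCommGroup E] [Module ℝ E] {C : ℕ → Set E}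
    (hC : Antitone C) (hconv : ∀ n, Convex ℝ (C n)) (hne : ∀ n, (C n).Nonempty) {J : E → ℝ}
    (hJa : BddAbove (J '' C 0)) (hJb : BddBelow (J '' C 0)) :
    ∃ g : ℕ → E, (∀ n, g n ∈ C n) ∧ ∀ η > 0, ∃ N, ∀ p ≥ N, ∀ q ≥ N,
      J (midpoint ℝ (g p) (g q)) - (J (g p) + J (g q)) / 2 < η := by
  set α : ℕ → ℝ := fun n => sSup (J '' C n)
  have hbdd n : BddAbove (J '' C n) := hJa.mono (image_mono (hC n.zero_le))
  have hle_α {n : ℕ} {x : E} (hx : x ∈ C n) : J x ≤ α n := le_csSup (hbdd n) ⟨x, hx, rfl⟩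
  have hα_anti : Antitone α := fun m n hmn =>
    csSup_le_csSup (hbdd m) ((hne n).image J) (image_mono (hC hmn))
  obtain ⟨b, hb⟩ := hJb
  have hα_bdd : BddBelow (Set.range α) := ⟨b, by
    rintro _ ⟨n, rfl⟩
    obtain ⟨x, hx⟩ := hne n
    exact (hb ⟨x, hC n.zero_le hx, rfl⟩).trans (hle_α hx)⟩
  have hchoice n : ∃ x ∈ C n, α n - (1 / 2) ^ n < J x := by
    obtain ⟨_, ⟨x, hx, rfl⟩, hlt⟩ :=
      exists_lt_of_lt_csSup ((hne n).image J) (sub_lt_self (α n) (pow_pos one_half_pos n))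
    exact ⟨x, hx, hlt⟩
  choose g hgC hgJ using hchoice
  refine ⟨g, hgC, fun η hη => ?_⟩
  obtain ⟨N₁, hN₁⟩ : ∃ N₁, α N₁ < (⨅ n, α n) + η / 2 :=
    exists_lt_of_ciInf_lt (lt_add_of_pos_right _ (half_pos hη))
  obtain ⟨N₂, hN₂⟩ : ∃ N₂, ((1 : ℝ) / 2) ^ N₂ < η / 2 :=
    exists_pow_lt_of_lt_one (half_pos hη) (by norm_num)
  have hlow {p : ℕ} (hp : N₂ ≤ p) : (⨅ n, α n) - η / 2 < J (g p) :=
    calc (⨅ n, α n) - η / 2 < α p - (1 / 2) ^ p := by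
          have := ciInf_le hα_bdd p
          have := pow_le_pow_of_le_one (by norm_num : (0 : ℝ) ≤ 1 / 2) (by norm_num) hp
          linarith
      _ < J (g p) := hgJ p
  refine ⟨max N₁ N₂, fun p hp q hq => ?_⟩
  have hmid : J (midpoint ℝ (g p) (g q)) ≤ α N₁ :=
    (hle_α ((hconv _).midpoint_mem (hC hp (hgC p)) (hC hq (hgC q)))).trans
      (hα_anti (le_max_left _ _))
  linarith [hlow ((le_max_right _ _).trans hp), hlow ((le_max_right _ _).trans hq)]

open Real in
theorem exp_neg_half_mul_le_sub {x y M ε : ℝ} (hε : 0 ≤ ε) (hxy : x + ε ≤ y) (hx : x ≤ M) :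
    exp (-M / 2) * (1 - exp (-(ε / 2))) ≤ exp (-x / 2) - exp (-y / 2) := by
  have hy : exp (-y / 2) ≤ exp (-x / 2) * exp (-(ε / 2)) := by
    rw [← exp_add]
    exact exp_le_exp.2 (by linarith)
  have hε' : 0 ≤ 1 - exp (-(ε / 2)) := sub_nonneg.2 (exp_le_one_iff.2 (by linarith))
  have hM : exp (-M / 2) ≤ exp (-x / 2) := exp_le_exp.2 (by linarith)
  nlinarith [mul_le_mul_of_nonneg_right hM hε']

noncomputable def expUtility (x : ℝ) : ℝ := 1 - Real.exp (-x)

noncomputable def concavityModulus (M ε : ℝ) : ℝ :=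
  (Real.exp (-M / 2) * (1 - Real.exp (-(ε / 2)))) ^ 2 / 2

theorem expUtility_mem_Icc {x : ℝ} (hx : 0 ≤ x) : expUtility x ∈ Set.Icc 0 1 :=
  ⟨sub_nonneg.2 (Real.exp_le_one_iff.2 (neg_nonpos.2 hx)),
    sub_le_self _ (Real.exp_pos _).le⟩

theorem concavityModulus_pos {ε : ℝ} (hε : 0 < ε) (M : ℝ) : 0 < concavityModulus M ε := by
  have : 0 < 1 - Real.exp (-(ε / 2)) := sub_pos.2 (Real.exp_lt_one_iff.2 (by linarith))
  unfold concavityModulus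
  positivity

open Real in
theorem expUtility_midpoint_sub (x y : ℝ) :
    expUtility (midpoint ℝ x y) - (expUtility x + expUtility y) / 2
      = (exp (-x / 2) - exp (-y / 2)) ^ 2 / 2 := by
  have hsq (z : ℝ) : exp (-z) = exp (-z / 2) ^ 2 := by rw [← exp_nat_mul]; ring_nf
  have hmid : exp (-midpoint ℝ x y) = exp (-x / 2) * exp (-y / 2) := by
    rw [← exp_add, midpoint_eq_smul_add]; congr 1; simp; ring
  simp only [expUtility, hmid, hsq x, hsq y]
  ring

theorem concavityModulus_le_expUtility_midpoint_sub {x y M ε : ℝ} (hε : 0 ≤ ε)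
    (hxy : ε ≤ |x - y|) (hx : x ≤ M) (hy : y ≤ M) :
    concavityModulus M ε ≤ expUtility (midpoint ℝ x y) - (expUtility x + expUtility y) / 2 := by
  have h0 : 0 ≤ Real.exp (-M / 2) * (1 - Real.exp (-(ε / 2))) :=
    mul_nonneg (Real.exp_pos _).le (sub_nonneg.2 (Real.exp_le_one_iff.2 (by linarith)))
  rw [expUtility_midpoint_sub, concavityModulus, ← sq_abs (Real.exp _ - _)]
  gcongr
  rcases le_total x y with hle | hle
  · rw [abs_sub_comm, abs_of_nonneg (sub_nonneg.2 hle)] at hxy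
    exact (exp_neg_half_mul_le_sub (y := y) hε (by linarith) hx).trans (le_abs_self _)
  · rw [abs_of_nonneg (sub_nonneg.2 hle)] at hxy
    rw [abs_sub_comm]
    exact (exp_neg_half_mul_le_sub (y := x) hε (by linarith) hy).trans (le_abs_self _)

theorem midpoint_nonneg {Ω : Type*} {g h : Ω → ℝ} (hg0 : 0 ≤ g) (hh0 : 0 ≤ h) :
    0 ≤ midpoint ℝ g h := by
  intro ω
  rw [pi_midpoint_apply, midpoint_eq_smul_add, invOf_eq_inv, smul_eq_mul]
  exact mul_nonneg (by norm_num) (add_nonneg (hg0 ω) (hh0 ω))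

section
variable {Ω : Type*} [MeasurableSpace Ω] {P : Measure Ω}

theorem integrable_expUtility_comp [IsFiniteMeasure P] {g : Ω → ℝ} (hg : Measurable g)
    (hg0 : 0 ≤ g) : Integrable (fun ω => expUtility (g ω)) P := by
  refine (integrable_const (1 : ℝ)).mono'
    (measurable_const.sub hg.neg.exp).aestronglyMeasurable (ae_of_all _ fun ω => ?_)
  obtain ⟨h0, h1⟩ := expUtility_mem_Icc (hg0 ω)
  rwa [Real.norm_of_nonneg h0]

theorem integral_expUtility_comp_mem_Icc [IsProbabilityMeasure P] {g : Ω → ℝ}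
    (hg : Measurable g) (hg0 : 0 ≤ g) : ∫ ω, expUtility (g ω) ∂P ∈ Set.Icc 0 1 :=
  ⟨integral_nonneg fun ω => (expUtility_mem_Icc (hg0 ω)).1,
    (integral_mono (integrable_expUtility_comp hg hg0) (integrable_const 1)
      fun ω => (expUtility_mem_Icc (hg0 ω)).2).trans_eq (by simp)⟩

theorem Measurable.midpoint {g h : Ω → ℝ} (hg : Measurable g) (hh : Measurable h) :
    Measurable (midpoint ℝ g h) := by
  rw [midpoint_eq_smul_add]
  exact (hg.add hh).const_smul _

theorem concavityModulus_mul_measureReal_le [IsFiniteMeasure P] {g h : Ω → ℝ}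
    (hg : Measurable g) (hh : Measurable h) (hg0 : 0 ≤ g) (hh0 : 0 ≤ h) {M ε : ℝ}
    (hε : 0 ≤ ε) :
    concavityModulus M ε * P.real {ω | ε ≤ |g ω - h ω| ∧ g ω ≤ M ∧ h ω ≤ M} ≤
      ∫ ω, expUtility (midpoint ℝ g h ω) ∂P -
        (∫ ω, expUtility (g ω) ∂P + ∫ ω, expUtility (h ω) ∂P) / 2 := by
  set S := {ω | ε ≤ |g ω - h ω| ∧ g ω ≤ M ∧ h ω ≤ M}
  have hS : MeasurableSet S :=
    (measurableSet_le measurable_const (hg.sub hh).abs).inter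
      ((measurableSet_le hg measurable_const).inter (measurableSet_le hh measurable_const))
  have hint_g := integrable_expUtility_comp (P := P) hg hg0
  have hint_h := integrable_expUtility_comp (P := P) hh hh0
  have hint_mid := integrable_expUtility_comp (P := P) (hg.midpoint hh) (midpoint_nonneg hg0 hh0)
  have hint_avg : Integrable (fun ω => (expUtility (g ω) + expUtility (h ω)) / 2) P :=
    (hint_g.add hint_h).div_const 2
  have hpoint : S.indicator (fun _ => concavityModulus M ε) ≤ fun ω =>
      expUtility (midpoint ℝ g h ω) - (expUtility (g ω) + expUtility (h ω)) / 2 := by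
    intro ω
    dsimp only
    by_cases hω : ω ∈ S
    · rw [indicator_of_mem hω]
      exact concavityModulus_le_expUtility_midpoint_sub hε hω.1 hω.2.1 hω.2.2
    · rw [indicator_of_notMem hω, pi_midpoint_apply, expUtility_midpoint_sub]
      positivity
  calc concavityModulus M ε * P.real S
      = ∫ ω, S.indicator (fun _ => concavityModulus M ε) ω ∂P := by
        rw [integral_indicator_const _ hS, smul_eq_mul, mul_comm]
    _ ≤ ∫ ω, (expUtility (midpoint ℝ g h ω) - (expUtility (g ω) + expUtility (h ω)) / 2) ∂P :=
        integral_mono ((integrable_const _).indicator hS) (hint_mid.sub hint_avg) hpoint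
    _ = _ := by
        rw [integral_sub hint_mid hint_avg, integral_div, integral_add hint_g hint_h]

theorem cauchy_in_measure_of_midpoint_gap [IsFiniteMeasure P] {g : ℕ → Ω → ℝ}
    (hg : ∀ n, Measurable (g n)) (hg0 : ∀ n, 0 ≤ g n)
    (htight : ∀ ε > (0 : ℝ), ∃ M, ∀ n, P {ω | M ≤ g n ω} < ENNReal.ofReal ε)
    (hgap : ∀ η > (0 : ℝ), ∃ N, ∀ p ≥ N, ∀ q ≥ N,
      ∫ ω, expUtility (midpoint ℝ (g p) (g q) ω) ∂P -
        (∫ ω, expUtility (g p ω) ∂P + ∫ ω, expUtility (g q ω) ∂P) / 2 < η) :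
    ∀ ε > (0 : ℝ), ∃ N, ∀ p ≥ N, ∀ q ≥ N,
      P {ω | ε ≤ |g p ω - g q ω|} < ENNReal.ofReal ε := by
  intro ε hε
  obtain ⟨M, hM⟩ := htight (ε / 4) (by positivity)
  have hδ := concavityModulus_pos hε M
  obtain ⟨N, hN⟩ := hgap (concavityModulus M ε * (ε / 2)) (by positivity)
  refine ⟨N, fun p hp q hq => ?_⟩
  set S := {ω | ε ≤ |g p ω - g q ω| ∧ g p ω ≤ M ∧ g q ω ≤ M}
  have hS : P S < ENNReal.ofReal (ε / 2) := by
    rw [ENNReal.lt_ofReal_iff_toReal_lt (measure_ne_top P S), ← measureReal_def]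
    refine lt_of_mul_lt_mul_left ?_ hδ.le
    exact (concavityModulus_mul_measureReal_le (hg p) (hg q) (hg0 p) (hg0 q) hε.le).trans_lt
      (hN p hp q hq)
  have hcover :
      {ω | ε ≤ |g p ω - g q ω|} ⊆ S ∪ {ω | M ≤ g p ω} ∪ {ω | M ≤ g q ω} := by
    intro ω hω
    by_cases hpM : g p ω ≤ M
    · by_cases hqM : g q ω ≤ M
      · exact Or.inl (Or.inl ⟨hω, hpM, hqM⟩)
      · exact Or.inr (le_of_not_ge hqM)
    · exact Or.inl (Or.inr (le_of_not_ge hpM))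
  calc P {ω | ε ≤ |g p ω - g q ω|}
      ≤ P S + P {ω | M ≤ g p ω} + P {ω | M ≤ g q ω} :=
        (measure_mono hcover).trans <|
          (measure_union_le _ _).trans (by gcongr; exact measure_union_le _ _)
    _ < ENNReal.ofReal (ε / 2) + ENNReal.ofReal (ε / 4) + ENNReal.ofReal (ε / 4) :=
        ENNReal.add_lt_add (ENNReal.add_lt_add hS (hM p)) (hM q)
    _ = ENNReal.ofReal ε := by
        rw [← ENNReal.ofReal_add (by positivity) (by positivity),
          ← ENNReal.ofReal_add (by positivity) (by positivity)]
        ring_nf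

theorem exists_strictMono_ae_tendsto_of_cauchy_in_measure {E : Type*} [PseudoMetricSpace E]
    [CompleteSpace E] {g : ℕ → Ω → E}
    (hg : ∀ ε > (0 : ℝ), ∃ N, ∀ p ≥ N, ∀ q ≥ N,
      P {ω | ε ≤ dist (g p ω) (g q ω)} < ENNReal.ofReal ε) :
    ∃ ns : ℕ → ℕ, StrictMono ns ∧
      ∃ L : Ω → E, ∀ᵐ ω ∂P, Tendsto (fun k => g (ns k) ω) atTop (𝓝 (L ω)) := by
  choose N hN using fun k : ℕ => hg ((1 / 2) ^ k) (by positivity)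
  obtain ⟨ns, hns, hNns⟩ := extraction_forall_of_eventually (P := fun k n => N k ≤ n)
    fun k => eventually_ge_atTop (N k)
  have hsum : ∑' k, P {ω | (1 / 2) ^ k ≤ dist (g (ns k) ω) (g (ns (k + 1)) ω)} ≠ ⊤ := by
    refine ne_top_of_le_ne_top ?_ (ENNReal.tsum_le_tsum fun k =>
      (hN k _ (hNns k) _ ((hNns k).trans (hns k.lt_succ_self).le)).le)
    rw [← ENNReal.ofReal_tsum_of_nonneg (fun k => by positivity) summable_geometric_two]
    exact ENNReal.ofReal_ne_top
  refine ⟨ns, hns, fun ω => haveI : Nonempty E := ⟨g 0 ω⟩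
    limUnder atTop fun k => g (ns k) ω, ?_⟩
  filter_upwards [ae_eventually_notMem hsum] with ω hω
  obtain ⟨K, hK⟩ := eventually_atTop.1 hω
  refine ((cauchySeq_shift K).1 (cauchySeq_of_le_geometric (1 / 2) ((1 / 2) ^ K) (by norm_num)
    fun i => ?_)).tendsto_limUnder
  have hi := not_le.1 (hK (i + K) (Nat.le_add_left K i))
  rw [show i + 1 + K = i + K + 1 by omega, ← pow_add, add_comm K]
  exact hi.le

end

/-- Komlós-type lemma (Delbaen–Schachermayer, Lemma A1.1): if the convex hull of a
sequence of nonnegative random variables is bounded in probability, then there is a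
sequence of forward convex combinations `gₙ ∈ conv(fₙ, f_{n+1}, …)` converging
almost surely to an (almost surely finite) random variable `g`. -/
theorem stmt_9 {Ω : Type*} [MeasurableSpace Ω] (P : Measure Ω) [IsProbabilityMeasure P]
    (f : ℕ → Ω → ℝ) (hmeas : ∀ n, Measurable (f n)) (hpos : ∀ n ω, 0 ≤ f n ω)
    (hbdd : ∀ ε > (0 : ℝ), ∃ M > (0 : ℝ), ∀ (m : ℕ) (a : ℕ → ℝ),
      (∀ j, 0 ≤ a j) → (∑ j ∈ Finset.range (m + 1), a j) = 1 →
      P {ω | M ≤ ∑ j ∈ Finset.range (m + 1), a j * f j ω} < ENNReal.ofReal ε) :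
    ∃ (m : ℕ → ℕ) (a : ℕ → ℕ → ℝ) (g : Ω → ℝ),
      (∀ n j, 0 ≤ a n j) ∧
      (∀ n, (∑ j ∈ Finset.range (m n + 1), a n j) = 1) ∧
      ∀ᵐ ω ∂P, Tendsto
        (fun n => ∑ j ∈ Finset.range (m n + 1), a n j * f (n + j) ω) atTop
        (nhds (g ω)) := by
  set C : ℕ → Set (Ω → ℝ) := fun n => convexHull ℝ (Set.range fun j => f (n + j))
  have hC_anti : Antitone C := fun m n hmn => convexHull_mono <| by
    rintro _ ⟨j, rfl⟩
    exact ⟨n - m + j, by simp only; congr 1; omega⟩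
  have hC_meas n : ∀ g ∈ C n, Measurable g ∧ 0 ≤ g :=
    fun g => measurable_and_nonneg_of_mem_convexHull <| by
      rintro _ ⟨j, rfl⟩
      exact ⟨hmeas _, hpos _⟩
  have hC_tight :
      ∀ ε > (0 : ℝ), ∃ M, ∀ g ∈ C 0, P {ω | M ≤ g ω} < ENNReal.ofReal ε := by
    intro ε hε
    obtain ⟨M, -, hM⟩ := hbdd ε hε
    refine ⟨M, fun g hg => ?_⟩
    obtain ⟨m, a, ha, hsum, rfl⟩ := exists_sum_range_eq_of_mem_convexHull_range hg
    simpa using hM m a ha hsum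
  have hJ : (fun g => ∫ ω, expUtility (g ω) ∂P) '' C 0 ⊆ Set.Icc 0 1 := by
    rintro _ ⟨g, hg, rfl⟩
    exact integral_expUtility_comp_mem_Icc (hC_meas 0 g hg).1 (hC_meas 0 g hg).2
  obtain ⟨g, hgC, hgap⟩ := exists_seq_midpoint_gap_lt hC_anti (fun n => convex_convexHull ℝ _)
    (fun n => ⟨f n, subset_convexHull ℝ _ ⟨0, rfl⟩⟩)
    (bddAbove_Icc.mono hJ) (bddBelow_Icc.mono hJ)
  have hg n := hC_meas n _ (hgC n)
  have hcauchy := cauchy_in_measure_of_midpoint_gap (fun n => (hg n).1) (fun n => (hg n).2)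
    (fun ε hε => (hC_tight ε hε).imp fun M hM n => hM _ (hC_anti n.zero_le (hgC n))) hgap
  simp only [← Real.dist_eq] at hcauchy
  obtain ⟨ns, hns, L, hL⟩ := exists_strictMono_ae_tendsto_of_cauchy_in_measure hcauchy
  choose m a ha hsum hrep using fun k =>
    exists_sum_range_eq_of_mem_convexHull_range (hC_anti (hns.id_le k) (hgC (ns k)))
  refine ⟨m, a, L, ha, hsum, ?_⟩
  filter_upwards [hL] with ω hω
  simpa [hrep] using hω
end
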